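/- Let μ = (μ₁ ≥ … ≥ μₙ ≥ 0) be a partition and let ν ∈ {0,1}ⁿ be such that μ + ν is NOT weakly decreasing. Then in ℂ(q), ∏_{i≠j, ν_i=0, ν_j=1} (q^{2k} − q^{2(μ_i − μ_j + k(j−i))}) / (1 − q^{2(μ_i − μ_j + k(j−i))}) = 0, where the product is over all ordered pairs i ≠ j with ν_i = 0 and ν_j = 1; moreover every denominator factor 1 − q^{2(μ_i − μ_j + k(j−i))} occurring in this product is nonzero. (That is, upon specializing the coefficients of the Macdonald operator M_r at x = q^{2(μ+kρ)}, all terms T_ν with μ + ν not dominant drop out.) -/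

import Mathlib

open scoped BigOperators
noncomputable section

/-- The coefficient field `F = ℂ(q)`. -/
abbrev F : Type := RatFunc ℂ

/-- The Laurent polynomial ring `Lₙ = F[x₁^{±1},…,xₙ^{±1}]`, realized as the group
algebra of `ℤⁿ` over `F`. -/
abbrev Lp (n : ℕ) : Type := AddMonoidAlgebra F (Fin n → ℤ)

/-- The indeterminate `q ∈ F = ℂ(q)`. -/
def q : F := RatFunc.X

/-- The exponent vector of the variable `x_i`. -/
def ee {n : ℕ} (i : Fin n) : Fin n → ℤ := Pi.single i 1

/-- The monomial `x^d`. -/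
def mono {n : ℕ} (d : Fin n → ℤ) : Lp n := AddMonoidAlgebra.single d 1

/-- `Sₙ`-invariance of a Laurent polynomial (invariance under permuting the variables). -/
def SymInv {n : ℕ} (f : Lp n) : Prop :=
  ∀ σ : Equiv.Perm (Fin n), Finsupp.mapDomain (fun d => d ∘ σ) f.coeff = f.coeff

/-- The bar involution `f̄(x₁,…,xₙ) = f(x₁⁻¹,…,xₙ⁻¹)`. -/
def bar {n : ℕ} (f : Lp n) : Lp n := AddMonoidAlgebra.ofCoeff (Finsupp.mapDomain (fun d => -d) f.coeff)

/-- The Macdonald density `Δ_k = ∏_{i≠j} ∏_{m=0}^{k-1} (1 - q^{2m} x_i/x_j)`. -/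
def Δ (n k : ℕ) : Lp n :=
  ∏ p ∈ (Finset.univ : Finset (Fin n × Fin n)).filter (fun p => p.1 ≠ p.2),
    ∏ m ∈ Finset.range k,
      (1 - AddMonoidAlgebra.single (ee p.1 - ee p.2) (q ^ (2 * m)))

/-- The Macdonald inner product `⟨f,g⟩_k = (1/n!)·CT(f·ḡ·Δ_k)`, where `CT` is the
constant term (coefficient of `x₁⁰⋯xₙ⁰`). -/
def ip (n k : ℕ) (f g : Lp n) : F :=
  ((n.factorial : F))⁻¹ * (f * bar g * Δ n k).coeff 0

/-- The orbit sum `m_λ = Σ_{μ ∈ Sₙλ} x^μ` (sum over distinct rearrangements of `λ`). -/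
def orb {n : ℕ} (l : Fin n → ℕ) : Lp n :=
  ∑ d ∈ Finset.image (fun σ : Equiv.Perm (Fin n) => fun i => ((l (σ i) : ℤ)))
      Finset.univ, mono d

/-- Dominance order: `μ ≤ λ` iff the total sums agree and all partial sums satisfy
`μ₁+…+μ_j ≤ λ₁+…+λ_j`. -/
def domLE {n : ℕ} (m l : Fin n → ℕ) : Prop :=
  (∑ i, m i = ∑ i, l i) ∧
  ∀ j : Fin n, ∑ i ∈ Finset.univ.filter (fun i => i ≤ j), m i ≤
    ∑ i ∈ Finset.univ.filter (fun i => i ≤ j), l i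

/-- Strict dominance order. -/
def domLT {n : ℕ} (m l : Fin n → ℕ) : Prop := domLE m l ∧ m ≠ l

/-- `P` is *the* family of Macdonald polynomials for `A_{n-1}` with parameters
`(q², q^{2k})`: for every partition `λ` (an antitone `l : Fin n → ℕ`), `P l` is
`Sₙ`-invariant, `P λ = m_λ + Σ_{μ<λ} c_{λμ} m_μ`, and distinct members are
orthogonal for `⟨·,·⟩_k`. -/
def IsMacFamily (n k : ℕ) (P : (Fin n → ℕ) → Lp n) : Prop :=
  (∀ l, Antitone l → SymInv (P l)) ∧
  (∀ l, Antitone l → P l - orb l ∈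
    Submodule.span F ((fun m : Fin n → ℕ => orb m) '' {m | Antitone m ∧ domLT m l})) ∧
  (∀ l m, Antitone l → Antitone m → l ≠ m → ip n k (P l) (P m) = 0)

/-- `a_{ij} = l_i − l_j + k(j−i)`, i.e. `(α, λ + kρ)` for the root `α = e_i − e_j`. -/
def aexp {n : ℕ} (k : ℕ) (l : Fin n → ℕ) (i j : Fin n) : ℤ :=
  (l i : ℤ) - (l j : ℤ) + (k : ℤ) * (((j : ℕ) : ℤ) - ((i : ℕ) : ℤ))

/-- The `q`-number `[a] = (q^a − q^{−a})/(q − q^{−1})`. -/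
def br (a : ℤ) : F := (q ^ a - q ^ (-a)) / (q - q⁻¹)

/-- The weight `2μ_i + k(n+1−2i)` (with `i` running through `1,…,n`), so that
`x_i = q^{wt n k μ i}` is the evaluation point `x = q^{2(μ+kρ)}`. -/
def wt (n k : ℕ) (l : Fin n → ℕ) (i : Fin n) : ℤ :=
  2 * (l i : ℤ) + (k : ℤ) * ((n : ℤ) - 1 - 2 * ((i : ℕ) : ℤ))

/-- Evaluation of a Laurent polynomial at the point `x_i = q^{w i}`. -/
def evAt {n : ℕ} (w : Fin n → ℤ) (f : Lp n) : F :=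
  f.coeff.sum (fun d c => c * q ^ (∑ i, w i * d i))

/-!
If `μ + ν` fails to be weakly decreasing while `μ` is, the failure happens at adjacent
positions `i, i+1` with `ν_i = 0`, `ν_{i+1} = 1` and `μ_i = μ_{i+1}`. For that root
`(α, μ + kρ) = k`, so its numerator `q^{2k} − q^{2k}` vanishes. The denominators are nonzero
because `(α, μ + kρ) ≠ 0` for every root when `μ` is dominant and `k ≥ 1`, and `q` has
infinite order in `ℂ(q)ˣ`.
-/
theorem q_zpow_eq_one_iff {a : ℤ} : q ^ a = 1 ↔ a = 0 := by
  refine ⟨fun h => ?_, fun h => by rw [h, zpow_zero]⟩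
  classical
  have := congrArg (RatFunc.inftyValuation ℂ) h
  rwa [q, RatFunc.inftyValuation.X_zpow, map_one, WithZero.exp_eq_one] at this

theorem exists_succ_pair_of_not_antitone_add {n : ℕ} {μ ν : Fin n → ℕ} (hμ : Antitone μ)
    (hν : ∀ i, ν i ≤ 1) (hnd : ¬ Antitone (fun i => μ i + ν i)) :
    ∃ i j : Fin n, (j : ℕ) = i + 1 ∧ ν i = 0 ∧ ν j = 1 ∧ μ i = μ j := by
  cases n with
  | zero => exact absurd (fun i => i.elim0) hnd
  | succ m =>
    obtain ⟨i, hi⟩ := not_forall.mp (mt Fin.antitone_iff_succ_le.mpr hnd)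
    have hμi := hμ (Fin.castSucc_le_succ i)
    have := hν i.castSucc
    have := hν i.succ
    exact ⟨i.castSucc, i.succ, by simp, by omega, by omega, by omega⟩

theorem aexp_ne_zero {n k : ℕ} (hk : 1 ≤ k) {μ : Fin n → ℕ} (hμ : Antitone μ) {i j : Fin n}
    (hij : i ≠ j) : aexp k μ i j ≠ 0 := by
  unfold aexp
  rcases hij.lt_or_gt with h | h
  · have := hμ h.le
    have : 0 < (k : ℤ) * ((j : ℕ) - (i : ℕ) : ℤ) := mul_pos (by omega) (by simp [h])
    omega
  · have := hμ h.le
    have : (k : ℤ) * ((j : ℕ) - (i : ℕ) : ℤ) < 0 := mul_neg_of_pos_of_neg (by omega) (by simp [h])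
    omega

theorem aexp_eq_of_val_eq_succ {n k : ℕ} {μ : Fin n → ℕ} {i j : Fin n} (hij : (j : ℕ) = i + 1)
    (hμ : μ i = μ j) : aexp k μ i j = k := by
  simp [aexp, hij, hμ]

theorem specialized_coefficient_vanishes_general (n k : ℕ) (hk : 1 ≤ k)
    (μ : Fin n → ℕ) (hμ : Antitone μ)
    (ν : Fin n → ℕ) (hν : ∀ i, ν i ≤ 1)
    (hnd : ¬ Antitone (fun i => μ i + ν i)) :
    (∀ i j : Fin n, i ≠ j → ν i = 0 → ν j = 1 →
      (1 : F) - q ^ (2 * aexp k μ i j) ≠ 0) ∧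
    ∏ p ∈ (Finset.univ : Finset (Fin n × Fin n)).filter
        (fun p => p.1 ≠ p.2 ∧ ν p.1 = 0 ∧ ν p.2 = 1),
      (q ^ (2 * k) - q ^ (2 * aexp k μ p.1 p.2)) /
      (1 - q ^ (2 * aexp k μ p.1 p.2)) = 0 := by
  refine ⟨fun i j hij _ _ => ?_, ?_⟩
  · rw [sub_ne_zero, ne_comm, Ne, q_zpow_eq_one_iff]
    exact mul_ne_zero two_ne_zero (aexp_ne_zero hk hμ hij)
  · obtain ⟨i, j, hij, hi, hj, hμij⟩ := exists_succ_pair_of_not_antitone_add hμ hν hnd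
    refine Finset.prod_eq_zero (i := (i, j)) ?_ ?_
    · simp [Fin.ne_of_val_ne (by omega : (i : ℕ) ≠ j), hi, hj]
    · rw [aexp_eq_of_val_eq_succ hij hμij, ← zpow_natCast, Nat.cast_mul, Nat.cast_ofNat, sub_self,
        zero_div]

/-- **Vanishing of non-dominant terms in the specialized Macdonald operator:**
if `μ` is a partition and `ν ∈ {0,1}ⁿ` is such that `μ + ν` is *not* weakly
decreasing, then every denominator factor `1 − q^{2(μ_i−μ_j+k(j−i))}` (over ordered
pairs `i ≠ j` with `ν_i = 0, ν_j = 1`) is nonzero, and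
`∏_{i≠j, ν_i=0, ν_j=1} (q^{2k} − q^{2(μ_i−μ_j+k(j−i))})/(1 − q^{2(μ_i−μ_j+k(j−i))}) = 0`
in `ℂ(q)`. -/
theorem specialized_coefficient_vanishes (n k : ℕ) (hn : 2 ≤ n) (hk : 1 ≤ k)
    (μ : Fin n → ℕ) (hμ : Antitone μ)
    (ν : Fin n → ℕ) (hν : ∀ i, ν i ≤ 1)
    (hnd : ¬ Antitone (fun i => μ i + ν i)) :
    (∀ i j : Fin n, i ≠ j → ν i = 0 → ν j = 1 →
      (1 : F) - q ^ (2 * aexp k μ i j) ≠ 0) ∧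
    ∏ p ∈ (Finset.univ : Finset (Fin n × Fin n)).filter
        (fun p => p.1 ≠ p.2 ∧ ν p.1 = 0 ∧ ν p.2 = 1),
      (q ^ (2 * k) - q ^ (2 * aexp k μ p.1 p.2)) /
      (1 - q ^ (2 * aexp k μ p.1 p.2)) = 0 :=
  specialized_coefficient_vanishes_general n k hk μ hμ ν hν hnd
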